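/- Let X be a decomposable continuum with the property of Kelley, let A be a subcontinuum of X, and let x, y ∈ X \ A with κ_{X\A}(x) ∩ κ_{X\A}(y) = ∅. If κ_{X\A}(x) meets the closure of κ_{X\A}(y), then κ_{X\A}(x) ⊆ Cl(κ_{X\A}(y)). -/

import Mathlib

open Set Metric Filter Topology TopologicalSpace

/-- A subcontinuum: a nonempty compact connected subset. -/
def IsSubcontinuum {X : Type*} [TopologicalSpace X] (K : Set X) : Prop :=
  IsCompact K ∧ IsConnected K

/-- `kappa A B` : the union of all subcontinua meeting `B` and avoiding `A`. -/
def kappa {X : Type*} [TopologicalSpace X] (A B : Set X) : Set X :=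
  ⋃₀ {L | IsSubcontinuum L ∧ (L ∩ B).Nonempty ∧ L ⊆ Aᶜ}

/-- A continuum is decomposable if it is the union of two proper subcontinua. -/
def Decomposable (X : Type*) [TopologicalSpace X] : Prop :=
  ∃ M N : Set X, IsSubcontinuum M ∧ IsSubcontinuum N ∧
    M ≠ univ ∧ N ≠ univ ∧ M ∪ N = univ

/-- The property of Kelley. -/
def KelleyProp (X : Type*) [MetricSpace X] : Prop :=
  ∀ (x : ℕ → X) (x₀ : X), Tendsto x atTop (𝓝 x₀) →
    ∀ A : Set X, IsSubcontinuum A → x₀ ∈ A →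
      ∃ B : ℕ → Set X, (∀ n, IsSubcontinuum (B n) ∧ x n ∈ B n) ∧
        Tendsto (fun n => hausdorffDist (B n) A) atTop (𝓝 0)

/-- The hyperspace of nonblockers of `F₁(X)`, as a subset of the hyperspace of
nonempty compact subsets of `X` with the Hausdorff metric. -/
def NB (X : Type*) [MetricSpace X] : Set (NonemptyCompacts X) :=
  {A | ∀ x ∉ (A : Set X), Dense (kappa (A : Set X) ({x} : Set X))}

/-- The minimal nonblocker containing `x` (equal to `X` if `x` lies in no nonblocker). -/
def piSet (X : Type*) [MetricSpace X] (x : X) : Set X :=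
  ⋂ A ∈ {A ∈ NB X | x ∈ (A : Set X)}, (A : Set X)

/-! Join the points `p ∈ κ(x) ∩ Cl κ(y)` and `q ∈ κ(x)` by a subcontinuum `K` of `X \ A`. Since
`p` is a limit of points of `κ(y)`, the property of Kelley yields subcontinua `B` meeting `κ(y)`
and arbitrarily Hausdorff-close to `K`. As `K` is compact and `A` closed, such a `B` misses `A`,
hence lies in `κ(y)`; and `q ∈ K` is close to `B`. -/

theorem IsSubcontinuum.union {X : Type*} [TopologicalSpace X] {K L : Set X}
    (hK : IsSubcontinuum K) (hL : IsSubcontinuum L) (hKL : (K ∩ L).Nonempty) :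
    IsSubcontinuum (K ∪ L) :=
  ⟨hK.1.union hL.1, hK.2.union hKL hL.2⟩

section Kappa

variable {X : Type*} [TopologicalSpace X] {A : Set X}

theorem mem_kappa_singleton {x z : X} :
    z ∈ kappa A {x} ↔ ∃ L, IsSubcontinuum L ∧ L ⊆ Aᶜ ∧ x ∈ L ∧ z ∈ L :=
  ⟨fun ⟨L, ⟨hL, hxL, hLA⟩, hzL⟩ => ⟨L, hL, hLA, inter_singleton_nonempty.1 hxL, hzL⟩,
    fun ⟨L, hL, hLA, hxL, hzL⟩ => ⟨L, ⟨hL, inter_singleton_nonempty.2 hxL, hLA⟩, hzL⟩⟩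

theorem exists_subcontinuum_of_mem_kappa_singleton {x p q : X}
    (hp : p ∈ kappa A {x}) (hq : q ∈ kappa A {x}) :
    ∃ K, IsSubcontinuum K ∧ K ⊆ Aᶜ ∧ p ∈ K ∧ q ∈ K := by
  obtain ⟨L, hL, hLA, hxL, hpL⟩ := mem_kappa_singleton.1 hp
  obtain ⟨M, hM, hMA, hxM, hqM⟩ := mem_kappa_singleton.1 hq
  exact ⟨L ∪ M, hL.union hM ⟨x, hxL, hxM⟩, union_subset hLA hMA, .inl hpL, .inr hqM⟩

theorem subset_kappa_singleton_of_inter_nonempty {L : Set X} {y : X} (hL : IsSubcontinuum L)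
    (hLA : L ⊆ Aᶜ) (hLy : (L ∩ kappa A {y}).Nonempty) : L ⊆ kappa A {y} := by
  obtain ⟨z, hzL, hzy⟩ := hLy
  obtain ⟨C, hC, hCA, hyC, hzC⟩ := mem_kappa_singleton.1 hzy
  exact fun w hw => mem_kappa_singleton.2
    ⟨L ∪ C, hL.union hC ⟨z, hzL, hzC⟩, union_subset hLA hCA, .inr hyC, .inl hw⟩

end Kappa

theorem subset_thickening_of_hausdorffDist_lt {X : Type*} [PseudoMetricSpace X] {s t : Set X}
    {δ : ℝ} (hfin : hausdorffEDist s t ≠ ⊤) (h : hausdorffDist s t < δ) :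
    s ⊆ thickening δ t :=
  fun _ hx => mem_thickening_iff.2 (exists_dist_lt_of_hausdorffDist_lt hx h hfin)

theorem KelleyProp.exists_subcontinuum_hausdorffDist_lt {X : Type*} [MetricSpace X]
    (hkel : KelleyProp X) {K S : Set X} {p : X} (hK : IsSubcontinuum K) (hpK : p ∈ K)
    (hpS : p ∈ closure S) {δ : ℝ} (hδ : 0 < δ) :
    ∃ B, IsSubcontinuum B ∧ (B ∩ S).Nonempty ∧ hausdorffEDist B K ≠ ⊤ ∧
      hausdorffDist B K < δ := by
  obtain ⟨u, huS, hu⟩ := mem_closure_iff_seq_limit.1 hpS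
  obtain ⟨B, hB, hBK⟩ := hkel u p hu K hK hpK
  obtain ⟨n, hn⟩ := (hBK.eventually (gt_mem_nhds hδ)).exists
  have hfin : hausdorffEDist (B n) K ≠ ⊤ :=
    hausdorffEDist_ne_top_of_nonempty_of_bounded (hB n).1.2.nonempty hK.2.nonempty
      (hB n).1.1.isBounded hK.1.isBounded
  exact ⟨B n, (hB n).1, ⟨u n, (hB n).2, huS n⟩, hfin, hn⟩

theorem stmt_9_general {X : Type*} [MetricSpace X]
    (hkel : KelleyProp X)
    (A : Set X) (hA : IsSubcontinuum A) (x y : X)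
    (hmeet : (kappa A ({x} : Set X) ∩ closure (kappa A ({y} : Set X))).Nonempty) :
    kappa A ({x} : Set X) ⊆ closure (kappa A ({y} : Set X)) := by
  obtain ⟨p, hpx, hpy⟩ := hmeet
  intro q hqx
  obtain ⟨K, hK, hKA, hpK, hqK⟩ := exists_subcontinuum_of_mem_kappa_singleton hpx hqx
  obtain ⟨δ, hδ, hδA⟩ := hK.1.exists_thickening_subset_open hA.1.isClosed.isOpen_compl hKA
  refine Metric.mem_closure_iff.2 fun ε hε => ?_
  obtain ⟨B, hB, hBy, hfin, hBK⟩ :=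
    hkel.exists_subcontinuum_hausdorffDist_lt hK hpK hpy (lt_min hε hδ)
  have hBA : B ⊆ Aᶜ :=
    (subset_thickening_of_hausdorffDist_lt hfin (hBK.trans_le (min_le_right _ _))).trans hδA
  obtain ⟨b, hbB, hbq⟩ :=
    exists_dist_lt_of_hausdorffDist_lt' hqK (hBK.trans_le (min_le_left _ _)) hfin
  exact ⟨b, subset_kappa_singleton_of_inter_nonempty hB hBA hBy hbB, dist_comm q b ▸ hbq⟩

theorem stmt_9 {X : Type*} [MetricSpace X] [CompactSpace X] [ConnectedSpace X] [Nonempty X]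
    (hdec : Decomposable X) (hkel : KelleyProp X)
    (A : Set X) (hA : IsSubcontinuum A) (x y : X) (hx : x ∈ Aᶜ) (hy : y ∈ Aᶜ)
    (hdisj : kappa A ({x} : Set X) ∩ kappa A ({y} : Set X) = ∅)
    (hmeet : (kappa A ({x} : Set X) ∩ closure (kappa A ({y} : Set X))).Nonempty) :
    kappa A ({x} : Set X) ⊆ closure (kappa A ({y} : Set X)) :=
  stmt_9_general hkel A hA x y hmeet
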